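/- With D as in the context, the kernel of D equals { τ_A ⊗ ρ_C ⊗ τ_B : ρ_C ∈ B(H_C) }; in particular dim ker D = n_C² where n_C = dim H_C. -/
import Mathlib


open Matrix
open scoped ComplexOrder

/-- `P(ρ) = τ_A ⊗ tr_A(ρ)` on `B(H_A ⊗ H_C ⊗ H_B)`. -/
noncomputable def resetA {A C B : Type*} [Fintype A]
    (τA : Matrix A A ℂ) (ρ : Matrix (A × C × B) (A × C × B) ℂ) :
    Matrix (A × C × B) (A × C × B) ℂ :=
  Matrix.of fun p q => τA p.1 q.1 * ∑ x, ρ (x, p.2) (x, q.2)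

/-- `Q(ρ) = tr_B(ρ) ⊗ τ_B` on `B(H_A ⊗ H_C ⊗ H_B)`. -/
noncomputable def resetB {A C B : Type*} [Fintype B]
    (τB : Matrix B B ℂ) (ρ : Matrix (A × C × B) (A × C × B) ℂ) :
    Matrix (A × C × B) (A × C × B) ℂ :=
  Matrix.of fun p q => (∑ y, ρ (p.1, p.2.1, y) (q.1, q.2.1, y)) * τB p.2.2 q.2.2

section Aux

variable {A C B : Type*} [Fintype A] [Fintype B]

lemma resetA_add (τA : Matrix A A ℂ) (ρ σ : Matrix (A × C × B) (A × C × B) ℂ) :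
    resetA τA (ρ + σ) = resetA τA ρ + resetA τA σ := by
  ext p q
  simp [resetA, Finset.sum_add_distrib, mul_add]

lemma resetA_smul (τA : Matrix A A ℂ) (r : ℝ) (ρ : Matrix (A × C × B) (A × C × B) ℂ) :
    resetA τA (r • ρ) = r • resetA τA ρ := by
  ext p q
  simp only [resetA, Matrix.of_apply, Matrix.smul_apply, Complex.real_smul]
  simp only [Finset.mul_sum]
  apply Finset.sum_congr rfl
  intro x _
  ring

lemma resetB_add (τB : Matrix B B ℂ) (ρ σ : Matrix (A × C × B) (A × C × B) ℂ) :
    resetB τB (ρ + σ) = resetB τB ρ + resetB τB σ := by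
  ext p q
  simp [resetB, Finset.sum_add_distrib, add_mul]

lemma resetB_smul (τB : Matrix B B ℂ) (r : ℝ) (ρ : Matrix (A × C × B) (A × C × B) ℂ) :
    resetB τB (r • ρ) = r • resetB τB ρ := by
  ext p q
  simp only [resetB, Matrix.of_apply, Matrix.smul_apply, Complex.real_smul]
  rw [← Finset.mul_sum, mul_assoc]

lemma resetA_resetA (τA : Matrix A A ℂ) (hτAtr : ∑ x, τA x x = 1)
    (ρ : Matrix (A × C × B) (A × C × B) ℂ) :
    resetA τA (resetA τA ρ) = resetA τA ρ := by
  ext p q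
  simp only [resetA, Matrix.of_apply]
  rw [← Finset.sum_mul, hτAtr, one_mul]

lemma resetB_resetB (τB : Matrix B B ℂ) (hτBtr : ∑ y, τB y y = 1)
    (ρ : Matrix (A × C × B) (A × C × B) ℂ) :
    resetB τB (resetB τB ρ) = resetB τB ρ := by
  ext p q
  simp only [resetB, Matrix.of_apply]
  rw [← Finset.mul_sum, hτBtr, mul_one]

lemma resetA_resetB_comm (τA : Matrix A A ℂ) (τB : Matrix B B ℂ)
    (ρ : Matrix (A × C × B) (A × C × B) ℂ) :
    resetA τA (resetB τB ρ) = resetB τB (resetA τA ρ) := by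
  ext p q
  simp only [resetA, resetB, Matrix.of_apply]
  conv_lhs => rw [← Finset.sum_mul]
  conv_rhs => rw [← Finset.mul_sum]
  rw [Finset.sum_comm, mul_assoc]

end Aux

/-- The kernel of the reset dissipator `D` is exactly
`{ τ_A ⊗ ρ_C ⊗ τ_B : ρ_C ∈ B(H_C) }`, of dimension `n_C²`. -/
theorem stmt9 {A C B : Type*} [Fintype A] [Fintype B] [Fintype C]
    (τA : Matrix A A ℂ) (hτA : τA.PosSemidef) (hτAtr : τA.trace = 1)
    (τB : Matrix B B ℂ) (hτB : τB.PosSemidef) (hτBtr : τB.trace = 1)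
    (γA γB : ℝ) (hγA : 0 < γA) (hγB : 0 < γB)
    (D : Module.End ℂ (Matrix (A × C × B) (A × C × B) ℂ))
    (hD : ∀ ρ, D ρ = γA • (resetA τA ρ - ρ) + γB • (resetB τB ρ - ρ)) :
    (∀ ρ : Matrix (A × C × B) (A × C × B) ℂ,
      D ρ = 0 ↔ ∃ ρC : Matrix C C ℂ,
        ρ = Matrix.of fun p q => τA p.1 q.1 * ρC p.2.1 q.2.1 * τB p.2.2 q.2.2) ∧
    Module.finrank ℂ (LinearMap.ker D) = Fintype.card C ^ 2 := by
  have htrA : ∑ x, τA x x = 1 := by simpa [Matrix.trace, Matrix.diag] using hτAtr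
  have htrB : ∑ y, τB y y = 1 := by simpa [Matrix.trace, Matrix.diag] using hτBtr
  have main : ∀ ρ : Matrix (A × C × B) (A × C × B) ℂ,
      D ρ = 0 ↔ ∃ ρC : Matrix C C ℂ,
        ρ = Matrix.of fun p q => τA p.1 q.1 * ρC p.2.1 q.2.1 * τB p.2.2 q.2.2 := by
    intro ρ
    constructor
    · intro h
      rw [hD] at h
      have h1 : γA • resetA τA ρ + γB • resetB τB ρ = (γA + γB) • ρ := by
        linear_combination (norm := module) h
      -- apply P to h1
      have h2 : γA • resetA τA (resetA τA ρ) + γB • resetA τA (resetB τB ρ)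
          = (γA + γB) • resetA τA ρ := by
        have := congrArg (resetA τA) h1
        rwa [resetA_add, resetA_smul, resetA_smul, resetA_smul] at this
      rw [resetA_resetA τA htrA] at h2
      have hPQ : resetA τA (resetB τB ρ) = resetA τA ρ := by
        apply smul_right_injective (Matrix (A × C × B) (A × C × B) ℂ) (ne_of_gt hγB)
        linear_combination (norm := module) h2
      -- apply Q to h1
      have h3 : γA • resetB τB (resetA τA ρ) + γB • resetB τB (resetB τB ρ)
          = (γA + γB) • resetB τB ρ := by
        have := congrArg (resetB τB) h1
        rwa [resetB_add, resetB_smul, resetB_smul, resetB_smul] at this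
      rw [resetB_resetB τB htrB] at h3
      have hQP : resetB τB (resetA τA ρ) = resetB τB ρ := by
        apply smul_right_injective (Matrix (A × C × B) (A × C × B) ℂ) (ne_of_gt hγA)
        linear_combination (norm := module) h3
      have hPQ' : resetA τA ρ = resetB τB ρ := by
        rw [← hPQ, resetA_resetB_comm, hQP]
      have hfix : resetA τA ρ = ρ := by
        apply smul_right_injective (Matrix (A × C × B) (A × C × B) ℂ)
          (ne_of_gt (add_pos hγA hγB))
        show (γA + γB) • resetA τA ρ = (γA + γB) • ρ
        rw [← h1, hPQ']
        module
      refine ⟨Matrix.of fun c c' => ∑ x, ∑ y, ρ (x, c, y) (x, c', y), ?_⟩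
      have : resetA τA (resetB τB ρ) =
          Matrix.of fun p q => τA p.1 q.1 *
            (Matrix.of fun c c' => ∑ x, ∑ y, ρ (x, c, y) (x, c', y)) p.2.1 q.2.1 *
            τB p.2.2 q.2.2 := by
        ext p q
        simp only [resetA, resetB, Matrix.of_apply]
        rw [← Finset.sum_mul, mul_assoc]
      rw [← this, hPQ, hfix]
    · rintro ⟨ρC, rfl⟩
      have hP : resetA τA (Matrix.of fun p q =>
          τA p.1 q.1 * ρC p.2.1 q.2.1 * τB p.2.2 q.2.2) =
          Matrix.of fun p q => τA p.1 q.1 * ρC p.2.1 q.2.1 * τB p.2.2 q.2.2 := by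
        ext p q
        simp only [resetA, Matrix.of_apply]
        rw [← Finset.sum_mul, ← Finset.sum_mul, htrA, one_mul, mul_assoc]
      have hQ : resetB τB (Matrix.of fun p q =>
          τA p.1 q.1 * ρC p.2.1 q.2.1 * τB p.2.2 q.2.2) =
          Matrix.of fun p q => τA p.1 q.1 * ρC p.2.1 q.2.1 * τB p.2.2 q.2.2 := by
        ext p q
        simp only [resetB, Matrix.of_apply]
        rw [show (∑ x, τA p.1 q.1 * ρC p.2.1 q.2.1 * τB x x)
            = τA p.1 q.1 * ρC p.2.1 q.2.1 from by rw [← Finset.mul_sum, htrB, mul_one]]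
      rw [hD, hP, hQ, sub_self, smul_zero, smul_zero, add_zero]
  refine ⟨main, ?_⟩
  -- the embedding ρC ↦ τA ⊗ ρC ⊗ τB
  set L : Matrix C C ℂ →ₗ[ℂ] Matrix (A × C × B) (A × C × B) ℂ :=
    { toFun := fun ρC => Matrix.of fun p q => τA p.1 q.1 * ρC p.2.1 q.2.1 * τB p.2.2 q.2.2
      map_add' := by
        intro x y
        ext p q
        simp [mul_add, add_mul]
      map_smul' := by
        intro c x
        ext p q
        simp
        ring } with hL
  have hker : LinearMap.ker D = LinearMap.range L := by
    ext ρ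
    rw [LinearMap.mem_ker, main ρ, LinearMap.mem_range]
    constructor
    · rintro ⟨ρC, h⟩; exact ⟨ρC, h.symm⟩
    · rintro ⟨ρC, h⟩; exact ⟨ρC, h.symm⟩
  obtain ⟨a₀, -, ha₀⟩ := Finset.exists_ne_zero_of_sum_ne_zero
    (htrA ▸ one_ne_zero : ∑ x, τA x x ≠ 0)
  obtain ⟨b₀, -, hb₀⟩ := Finset.exists_ne_zero_of_sum_ne_zero
    (htrB ▸ one_ne_zero : ∑ y, τB y y ≠ 0)
  have hinj : Function.Injective L := by
    intro x y h
    ext c c'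
    have h2 : (L x) (a₀, c, b₀) (a₀, c', b₀) = (L y) (a₀, c, b₀) (a₀, c', b₀) := by rw [h]
    simp only [hL, LinearMap.coe_mk, AddHom.coe_mk, Matrix.of_apply] at h2
    have := mul_right_cancel₀ hb₀ h2
    exact mul_left_cancel₀ ha₀ this
  rw [hker, LinearMap.finrank_range_of_inj hinj, Module.finrank_matrix]
  simp [sq]
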